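/- The competition number of the icosahedron graph is at most 4; explicitly, there exists an acyclic digraph D on the 12 icosahedron vertices together with 4 extra vertices whose competition graph is the icosahedron plus 4 isolated vertices. -/

import Mathlib

open SimpleGraph

/-- The competition graph of a digraph `D` (given as a relation): distinct vertices
`x`, `y` are adjacent iff they have a common out-neighbor in `D`. -/
def CompetitionGraph {V : Type*} (D : V → V → Prop) : SimpleGraph V where
  Adj x y := x ≠ y ∧ ∃ v, D x v ∧ D y v
  symm := ⟨by rintro x y ⟨h, v, hx, hy⟩; exact ⟨h.symm, v, hy, hx⟩⟩
  loopless := ⟨by rintro x ⟨h, -⟩; exact h rfl⟩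

/-- A digraph is acyclic iff it has no directed cycle, i.e. no vertex reaches itself
by a nonempty directed walk. -/
def DigraphAcyclic {V : Type*} (D : V → V → Prop) : Prop :=
  ∀ v, ¬ Relation.TransGen D v v

/-- The graph `G` together with `k` additional isolated vertices. -/
def addIsolated {V : Type*} (G : SimpleGraph V) (k : ℕ) : SimpleGraph (V ⊕ Fin k) where
  Adj a b := ∃ x y, a = Sum.inl x ∧ b = Sum.inl y ∧ G.Adj x y
  symm := ⟨by rintro a b ⟨x, y, rfl, rfl, h⟩; exact ⟨y, x, rfl, rfl, h.symm⟩⟩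
  loopless := ⟨by
    rintro a ⟨x, y, rfl, hy, h⟩
    obtain rfl := Sum.inl_injective hy
    exact G.ne_of_adj h rfl⟩

/-- `G` plus `k` isolated vertices is the competition graph of some acyclic digraph. -/
def IsCompetitionWitness {V : Type*} (G : SimpleGraph V) (k : ℕ) : Prop :=
  ∃ D : (V ⊕ Fin k) → (V ⊕ Fin k) → Prop,
    DigraphAcyclic D ∧ CompetitionGraph D = addIsolated G k

/-- The competition number of `G`: the least `k` such that `G` plus `k` isolated
vertices is the competition graph of an acyclic digraph. -/
noncomputable def compNum {V : Type*} (G : SimpleGraph V) : ℕ :=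
  sInf {k | IsCompetitionWitness G k}

/-- The generalized edge clique cover number `θ_E(F; H)`: the minimum number of cliques
of `G` contained in the vertex set `H` (i.e. cliques of the induced subgraph on `H`)
needed so that every edge in `F` has both endpoints in some clique of the family. -/
noncomputable def thetaEOn {V : Type*} (G : SimpleGraph V) (F : Set (Sym2 V)) (H : Set V) : ℕ :=
  sInf {n | ∃ f : Fin n → Set V,
    (∀ i, f i ⊆ H ∧ G.IsClique (f i)) ∧ ∀ e ∈ F, ∃ i, ∀ x ∈ e, x ∈ f i}

/-- The edge clique cover number `θ_E(G)`. -/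
noncomputable def thetaE {V : Type*} (G : SimpleGraph V) : ℕ :=
  thetaEOn G G.edgeSet Set.univ

/-- The vertex clique cover number of the subgraph of `G` induced on `S`: the minimum
number of cliques of `G` contained in `S` whose union covers `S`. -/
noncomputable def thetaVOn {V : Type*} (G : SimpleGraph V) (S : Set V) : ℕ :=
  sInf {n | ∃ f : Fin n → Set V,
    (∀ i, f i ⊆ S ∧ G.IsClique (f i)) ∧ ∀ v ∈ S, ∃ i, v ∈ f i}

/-- The closed neighborhood `N_G[U]` of a vertex subset. -/
def closedNbhd {V : Type*} (G : SimpleGraph V) (U : Set V) : Set V :=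
  U ∪ {v | ∃ u ∈ U, G.Adj u v}

/-- The set `E_G[U]` of edges of `G` with at least one endpoint in `U`. -/
def incidentEdges {V : Type*} (G : SimpleGraph V) (U : Set V) : Set (Sym2 V) :=
  {e | e ∈ G.edgeSet ∧ ∃ x ∈ e, x ∈ U}

/-- The edge list of the icosahedron graph (pentagonal antiprism on `1..10` together
with apexes `0` and `11`). -/
def icosaEdges : List (ℕ × ℕ) :=
  [(0,1),(0,2),(0,3),(0,4),(0,5),(1,2),(2,3),(3,4),(4,5),(5,1),
   (11,6),(11,7),(11,8),(11,9),(11,10),(6,7),(7,8),(8,9),(9,10),(10,6),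
   (1,6),(1,7),(2,7),(2,8),(3,8),(3,9),(4,9),(4,10),(5,10),(5,6)]

/-- The icosahedron graph: the 5-regular graph on 12 vertices with 30 edges
arising as the 1-skeleton of the icosahedron. -/
def Icosahedron : SimpleGraph (Fin 12) :=
  SimpleGraph.fromRel (fun i j => ((i : ℕ), (j : ℕ)) ∈ icosaEdges)

/-! Cover the 30 edges of the icosahedron by 13 cliques and let each clique prey on a vertex of
its own that comes after all of its members, in the order `0, 1, …, 11` followed by the four new
vertices: the first nine cliques prey on `3, …, 11`, the last four on the new vertices. Since
distinct cliques have distinct prey, two vertices compete exactly when they share a clique, and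
since arcs only go forward the digraph is acyclic. -/

theorem digraphAcyclic_of_rank_lt {V α : Type*} [Preorder α] {D : V → V → Prop} (r : V → α)
    (hr : ∀ x y, D x y → r x < r y) : DigraphAcyclic D := fun v hv =>
  lt_irrefl (r v) <| by
    simpa only [Relation.transGen_eq_self] using hv.lift r (p := (· < ·)) hr

theorem compNum_le {V : Type*} {G : SimpleGraph V} {k : ℕ} (h : IsCompetitionWitness G k) :
    compNum G ≤ k :=
  Nat.sInf_le h

theorem isCompetitionWitness_of_cliqueCover {V α : Type*} [Preorder α] (G : SimpleGraph V)
    {k m : ℕ} (C : Fin m → Set V) (prey : Fin m → V ⊕ Fin k) (r : V ⊕ Fin k → α)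
    (hclique : ∀ i, G.IsClique (C i)) (hcover : ∀ x y, G.Adj x y → ∃ i, x ∈ C i ∧ y ∈ C i)
    (hprey : Function.Injective prey) (hr : ∀ i, ∀ x ∈ C i, r (Sum.inl x) < r (prey i)) :
    IsCompetitionWitness G k := by
  refine ⟨fun a b => ∃ i, ∃ x ∈ C i, a = Sum.inl x ∧ b = prey i, ?_, ?_⟩
  · refine digraphAcyclic_of_rank_lt r ?_
    rintro _ _ ⟨i, x, hx, rfl, rfl⟩
    exact hr i x hx
  · ext a b
    constructor
    · rintro ⟨hab, _, ⟨i, x, hx, rfl, rfl⟩, ⟨j, y, hy, rfl, hij⟩⟩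
      obtain rfl := hprey hij
      exact ⟨x, y, rfl, rfl, hclique i hx hy fun hxy => hab (hxy ▸ rfl)⟩
    · rintro ⟨x, y, rfl, rfl, hxy⟩
      obtain ⟨i, hx, hy⟩ := hcover x y hxy
      exact ⟨fun h => G.ne_of_adj hxy (Sum.inl_injective h),
        prey i, ⟨i, x, hx, rfl, rfl⟩, ⟨i, y, hy, rfl, rfl⟩⟩

instance : DecidableRel Icosahedron.Adj := fun i j =>
  decidable_of_iff _ (SimpleGraph.fromRel_adj _ i j).symm

def icosahedronCliques : Fin 13 → Finset (Fin 12) :=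
  ![{0, 1, 2}, {0, 2, 3}, {0, 3, 4}, {0, 4, 5}, {0, 5, 1},
    {1, 6, 7}, {2, 7, 8}, {3, 8, 9}, {4, 9, 10}, {5, 10, 6},
    {11, 6, 7}, {11, 8, 9}, {11, 10}]

def icosahedronPrey : Fin 13 → Fin 12 ⊕ Fin 4 :=
  ![.inl 3, .inl 4, .inl 5, .inl 6, .inl 7, .inl 8, .inl 9, .inl 10, .inl 11,
    .inr 0, .inr 1, .inr 2, .inr 3]

theorem isCompetitionWitness_icosahedron : IsCompetitionWitness Icosahedron 4 := by
  refine isCompetitionWitness_of_cliqueCover Icosahedron (fun i => icosahedronCliques i)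
    icosahedronPrey toLex ?_ ?_ ?_ ?_ <;> decide

theorem competition_number_icosahedron_upper_bound :
    (∃ D : (Fin 12 ⊕ Fin 4) → (Fin 12 ⊕ Fin 4) → Prop,
      DigraphAcyclic D ∧ CompetitionGraph D = addIsolated Icosahedron 4) ∧
    compNum Icosahedron ≤ 4 :=
  ⟨isCompetitionWitness_icosahedron, compNum_le isCompetitionWitness_icosahedron⟩
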